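/- arXiv:1904.08984 — 4 statements merged into one kernel-verified Lean document; each statement's English description precedes it below -/
import Mathlib

section
/- Let $p\in\mathbb{N}$, $\epsilon>0$, and let $f(z)=z^p-\sum_{k=p+1}^\infty a_k z^k$, $g(z)=z^p-\sum_{k=p+1}^\infty b_k z^k$ with $a_k,b_k\ge 0$, $\sum_{k=p+1}^\infty k|a_k-b_k|\le\epsilon$, and $\sum_{k=p+1}^\infty b_k \le M < 1$. Then for all $z$ in the open unit disc, $\left|\frac{f(z)}{g(z)}-1\right| \le \frac{\epsilon/(p+1)}{1-M}$. -/
/-!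
Write `f - g = -∑ (aₖ - bₖ) zᵏ` and `g = zᵖ - ∑ bₖ zᵏ`. Both series start at `k = p + 1`, so on
the closed unit disc each is bounded by `‖z‖ᵖ` times the sum of the absolute values of its
coefficients. This gives `‖f z - g z‖ ≤ S ‖z‖ᵖ` with `S = ∑ |aₖ - bₖ|` and
`‖g z‖ ≥ ‖z‖ᵖ (1 - M)`, so the factor `‖z‖ᵖ` cancels in the quotient. Finally
`(p + 1) S ≤ ∑ k |aₖ - bₖ| ≤ ε` because the coefficients vanish below `p + 1`.
-/

theorem summable_of_summable_natCast_mul {c : ℕ → ℝ} (hc : ∀ k, 0 ≤ c k)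
    (h : Summable fun k : ℕ => (k : ℝ) * c k) : Summable c := by
  rw [← summable_nat_add_iff 1]
  refine ((summable_nat_add_iff 1).mpr h).of_nonneg_of_le (fun k => hc _) fun k => ?_
  have hk : (1 : ℝ) ≤ ((k + 1 : ℕ) : ℝ) := by exact_mod_cast Nat.le_add_left 1 k
  exact le_mul_of_one_le_left (hc _) hk

theorem natCast_mul_tsum_le_tsum_natCast_mul {c : ℕ → ℝ} {n : ℕ} (hc : ∀ k, 0 ≤ c k)
    (hvanish : ∀ k < n, c k = 0) (h : Summable fun k : ℕ => (k : ℝ) * c k) :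
    (n : ℝ) * ∑' k, c k ≤ ∑' k : ℕ, (k : ℝ) * c k := by
  rw [← tsum_mul_left]
  refine Summable.tsum_le_tsum (fun k => ?_)
    ((summable_of_summable_natCast_mul hc h).mul_left _) h
  rcases lt_or_ge k n with hk | hk
  · simp [hvanish k hk]
  · exact mul_le_mul_of_nonneg_right (by exact_mod_cast hk) (hc k)

section PowerSeries

variable {𝕜 : Type*} [NormedDivisionRing 𝕜] {c : ℕ → 𝕜} {p : ℕ} {z : 𝕜}

theorem summable_mul_pow_of_summable_norm [CompleteSpace 𝕜] (hsum : Summable fun k => ‖c k‖)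
    (hz : ‖z‖ ≤ 1) : Summable fun k => c k * z ^ k :=
  Summable.of_norm_bounded hsum fun k => by
    rw [norm_mul, norm_pow]
    exact mul_le_of_le_one_right (norm_nonneg _) (pow_le_one₀ (norm_nonneg _) hz)

theorem norm_tsum_mul_pow_le (hvanish : ∀ k < p, c k = 0) (hsum : Summable fun k => ‖c k‖)
    (hz : ‖z‖ ≤ 1) : ‖∑' k, c k * z ^ k‖ ≤ (∑' k, ‖c k‖) * ‖z‖ ^ p := by
  have hterm : ∀ k, ‖c k * z ^ k‖ ≤ ‖c k‖ * ‖z‖ ^ p := fun k => by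
    rw [norm_mul, norm_pow]
    rcases lt_or_ge k p with hk | hk
    · simp [hvanish k hk]
    · exact mul_le_mul_of_nonneg_left (pow_le_pow_of_le_one (norm_nonneg z) hz hk)
        (norm_nonneg _)
  have hbound := hsum.mul_right (‖z‖ ^ p)
  rw [← tsum_mul_right]
  calc ‖∑' k, c k * z ^ k‖ ≤ ∑' k, ‖c k * z ^ k‖ :=
        norm_tsum_le_tsum_norm (hbound.of_nonneg_of_le (fun _ => norm_nonneg _) hterm)
    _ ≤ ∑' k, ‖c k‖ * ‖z‖ ^ p :=
        Summable.tsum_le_tsum hterm (hbound.of_nonneg_of_le (fun _ => norm_nonneg _) hterm) hbound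

theorem norm_tsum_mul_pow_sub_tsum_mul_pow_le [CompleteSpace 𝕜] {d : ℕ → 𝕜}
    (hvanish : ∀ k < p, c k = d k) (hsub : Summable fun k => ‖c k - d k‖)
    (hd : Summable fun k => ‖d k‖) (hz : ‖z‖ ≤ 1) :
    ‖∑' k, c k * z ^ k - ∑' k, d k * z ^ k‖ ≤ (∑' k, ‖c k - d k‖) * ‖z‖ ^ p := by
  have hdz := summable_mul_pow_of_summable_norm hd hz
  have hcz : Summable fun k => c k * z ^ k := by
    simpa [sub_mul] using (summable_mul_pow_of_summable_norm hsub hz).add hdz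
  rw [← hcz.tsum_sub hdz]
  simp only [← sub_mul]
  exact norm_tsum_mul_pow_le (fun k hk => sub_eq_zero.mpr (hvanish k hk)) hsub hz

theorem norm_pow_mul_one_sub_tsum_norm_le (hvanish : ∀ k < p + 1, c k = 0)
    (hsum : Summable fun k => ‖c k‖) (hz : ‖z‖ ≤ 1) :
    ‖z‖ ^ p * (1 - ∑' k, ‖c k‖) ≤ ‖z ^ p - ∑' k, c k * z ^ k‖ := by
  have htail := norm_tsum_mul_pow_le (fun k hk => hvanish k (Nat.lt_succ_of_lt hk)) hsum hz
  calc ‖z‖ ^ p * (1 - ∑' k, ‖c k‖) = ‖z ^ p‖ - (∑' k, ‖c k‖) * ‖z‖ ^ p := by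
        rw [norm_pow]; ring
    _ ≤ ‖z ^ p‖ - ‖∑' k, c k * z ^ k‖ := by linarith
    _ ≤ ‖z ^ p - ∑' k, c k * z ^ k‖ := norm_sub_norm_le _ _

end PowerSeries

theorem norm_div_sub_one_le_of_norm_sub_le {𝕜 : Type*} [NormedField 𝕜] {u v : 𝕜} {r s m : ℝ}
    (hr : 0 < r) (hm : 0 < m) (huv : ‖u - v‖ ≤ s * r) (hv : r * m ≤ ‖v‖) :
    ‖u / v - 1‖ ≤ s / m := by
  have hv0 : v ≠ 0 := norm_pos_iff.mp ((mul_pos hr hm).trans_le hv)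
  rw [div_sub_one hv0, norm_div]
  calc ‖u - v‖ / ‖v‖ ≤ s * r / (r * m) :=
        div_le_div₀ ((norm_nonneg _).trans huv) huv (mul_pos hr hm) hv
    _ = s / m := by rw [mul_comm r m, mul_div_mul_right _ _ hr.ne']

theorem stmt2_general (p : ℕ) (ε M : ℝ) (hM : M < 1)
    (a b : ℕ → ℝ) (hb0 : ∀ k, 0 ≤ b k)
    (haz : ∀ k, k < p + 1 → a k = 0) (hbz : ∀ k, k < p + 1 → b k = 0)
    (hdsum : Summable (fun k : ℕ => (k : ℝ) * |a k - b k|))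
    (hdle : (∑' k : ℕ, (k : ℝ) * |a k - b k|) ≤ ε)
    (hbsum : Summable b) (hble : (∑' k : ℕ, b k) ≤ M)
    (f g : ℂ → ℂ)
    (hf : ∀ z : ℂ, f z = z ^ p - ∑' k : ℕ, (a k : ℂ) * z ^ k)
    (hg : ∀ z : ℂ, g z = z ^ p - ∑' k : ℕ, (b k : ℂ) * z ^ k) :
    ∀ z : ℂ, ‖z‖ < 1 → z ≠ 0 → ‖f z / g z - 1‖ ≤ (ε / ((p : ℝ) + 1)) / (1 - M) := by
  intro z hz hz0
  have hnorm_sub : ∀ k, ‖(a k : ℂ) - b k‖ = |a k - b k| := fun k => by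
    rw [← Complex.ofReal_sub, Complex.norm_real, Real.norm_eq_abs]
  have hnorm_b : ∀ k, ‖(b k : ℂ)‖ = b k := fun k => by
    rw [Complex.norm_real, Real.norm_of_nonneg (hb0 k)]
  have hdabs : Summable fun k => |a k - b k| :=
    summable_of_summable_natCast_mul (fun _ => abs_nonneg _) hdsum
  have hbnorm : Summable fun k => ‖(b k : ℂ)‖ := hbsum.congr fun k => (hnorm_b k).symm
  have hdε : ((p : ℝ) + 1) * ∑' k, |a k - b k| ≤ ε := by
    have := natCast_mul_tsum_le_tsum_natCast_mul (n := p + 1) (fun _ => abs_nonneg _)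
      (fun k hk => by simp [haz k hk, hbz k hk]) hdsum
    push_cast at this
    linarith
  have hnum : ‖f z - g z‖ ≤ (∑' k, |a k - b k|) * ‖z‖ ^ p := by
    rw [hf, hg, sub_sub_sub_cancel_left, norm_sub_rev]
    simpa only [hnorm_sub] using norm_tsum_mul_pow_sub_tsum_mul_pow_le
      (fun k hk => by simp [haz k (by omega), hbz k (by omega)])
      (hdabs.congr fun k => (hnorm_sub k).symm) hbnorm hz.le
  have hden : ‖z‖ ^ p * (1 - M) ≤ ‖g z‖ := by
    have := norm_pow_mul_one_sub_tsum_norm_le (p := p) (fun k hk => by simp [hbz k hk]) hbnorm hz.le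
    simp only [hnorm_b, ← hg] at this
    exact le_trans (by gcongr) this
  calc ‖f z / g z - 1‖ ≤ (∑' k, |a k - b k|) / (1 - M) :=
        norm_div_sub_one_le_of_norm_sub_le (by positivity) (by linarith) hnum hden
    _ ≤ ε / ((p : ℝ) + 1) / (1 - M) := by
        gcongr
        rw [le_div_iff₀ (by positivity)]
        linarith

theorem stmt2 (p : ℕ) (hp : 1 ≤ p) (ε M : ℝ) (hε : 0 < ε) (hM : M < 1)
    (a b : ℕ → ℝ) (ha0 : ∀ k, 0 ≤ a k) (hb0 : ∀ k, 0 ≤ b k)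
    (haz : ∀ k, k < p + 1 → a k = 0) (hbz : ∀ k, k < p + 1 → b k = 0)
    (hdsum : Summable (fun k : ℕ => (k : ℝ) * |a k - b k|))
    (hdle : (∑' k : ℕ, (k : ℝ) * |a k - b k|) ≤ ε)
    (hbsum : Summable b) (hble : (∑' k : ℕ, b k) ≤ M)
    (f g : ℂ → ℂ)
    (hf : ∀ z : ℂ, f z = z ^ p - ∑' k : ℕ, (a k : ℂ) * z ^ k)
    (hg : ∀ z : ℂ, g z = z ^ p - ∑' k : ℕ, (b k : ℂ) * z ^ k) :
    ∀ z : ℂ, ‖z‖ < 1 → z ≠ 0 → ‖f z / g z - 1‖ ≤ (ε / ((p : ℝ) + 1)) / (1 - M) :=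
  stmt2_general p ε M hM a b hb0 haz hbz hdsum hdle hbsum hble f g hf hg
end

section
/- Let $0\le\alpha<p$, $0\le\mu<1$, $0\le\delta\le1$, $-1\le B<A\le1$, $p\in\mathbb{N}$, $\varphi>-p$. Suppose $g(z)=z^p-\sum_{k=p+1}^\infty b_k z^k$ with $b_k\ge0$ satisfies $\sum_{k=p+1}^\infty k b_k \le \frac{(p+1)(A-B)(p-\alpha)}{[(1-B)+(A-B)(p-\alpha)](1-\mu)(p+\delta)}$, and define $a_k = \frac{(p+\varphi)(p+\varphi+1)}{(k+\varphi)(k+\varphi+1)} b_k$ for $k\ge p+1$. Then $\sum_{k=p+1}^\infty k|b_k - a_k| \le \frac{(p+1)(A-B)(p-\alpha)}{[(1-B)+(A-B)(p-\alpha)](1-\mu)(p+\delta)} \cdot \frac{2(p+\varphi+1)}{p+\varphi+2}$. -/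
/-!
Since `0 ≤ a k ≤ b k`, each term satisfies `k |b k - a k| ≤ k b k`, so the sum is at most the
bound `C` on `∑ k b k`; and `C ≤ C · 2(p+φ+1)/(p+φ+2)` because that factor is at least `1`
once `p + φ ≥ 0`.
-/

lemma mul_add_one_div_mul_add_one_mem_Icc {x y : ℝ} (hx : 0 ≤ x) (hxy : x ≤ y) :
    x * (x + 1) / (y * (y + 1)) ∈ Set.Icc 0 1 := by
  have hy : 0 ≤ y * (y + 1) := mul_nonneg (hx.trans hxy) (by linarith)
  exact ⟨div_nonneg (by positivity) hy,
    div_le_one_of_le₀ (mul_le_mul hxy (by linarith) (by linarith) (by linarith)) hy⟩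

lemma abs_sub_mul_self_le {b c : ℝ} (hb : 0 ≤ b) (hc : c ∈ Set.Icc 0 1) : |b - c * b| ≤ b := by
  have hcb : c * b ≤ b := mul_le_of_le_one_left hb hc.2
  rw [abs_of_nonneg (by linarith)]
  linarith [mul_nonneg hc.1 hb]

lemma one_le_two_mul_add_one_div_add_two {x : ℝ} (hx : 0 ≤ x) : 1 ≤ 2 * (x + 1) / (x + 2) := by
  rw [one_le_div₀ (by linarith)]
  linarith

theorem stmt3_general (p : ℕ) (α μ δ A B φ : ℝ)
    (hφ : -(p : ℝ) < φ)
    (b : ℕ → ℝ) (hb0 : ∀ k, 0 ≤ b k) (hbz : ∀ k, k < p + 1 → b k = 0)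
    (hbsum : Summable (fun k : ℕ => (k : ℝ) * b k))
    (hble : (∑' k : ℕ, (k : ℝ) * b k) ≤
      ((p : ℝ) + 1) * (A - B) * ((p : ℝ) - α) /
        (((1 - B) + (A - B) * ((p : ℝ) - α)) * (1 - μ) * ((p : ℝ) + δ)))
    (a : ℕ → ℝ)
    (ha : ∀ k, p + 1 ≤ k →
      a k = ((p : ℝ) + φ) * ((p : ℝ) + φ + 1) / (((k : ℝ) + φ) * ((k : ℝ) + φ + 1)) * b k)
    (haz : ∀ k, k < p + 1 → a k = 0)
    (hdsum : Summable (fun k : ℕ => (k : ℝ) * |b k - a k|)) :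
    (∑' k : ℕ, (k : ℝ) * |b k - a k|) ≤
      ((p : ℝ) + 1) * (A - B) * ((p : ℝ) - α) /
        (((1 - B) + (A - B) * ((p : ℝ) - α)) * (1 - μ) * ((p : ℝ) + δ)) *
        (2 * ((p : ℝ) + φ + 1) / ((p : ℝ) + φ + 2)) := by
  set C := ((p : ℝ) + 1) * (A - B) * ((p : ℝ) - α) /
    (((1 - B) + (A - B) * ((p : ℝ) - α)) * (1 - μ) * ((p : ℝ) + δ))
  have hpφ : 0 ≤ (p : ℝ) + φ := by linarith
  have hterm : ∀ k : ℕ, (k : ℝ) * |b k - a k| ≤ k * b k := by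
    intro k
    refine mul_le_mul_of_nonneg_left ?_ k.cast_nonneg
    rcases lt_or_ge k (p + 1) with hk | hk
    · simp [hbz k hk, haz k hk]
    · have hpk : (p : ℝ) + φ ≤ k + φ := by
        have : (p : ℝ) + 1 ≤ k := by exact_mod_cast hk
        linarith
      rw [ha k hk]
      exact abs_sub_mul_self_le (hb0 k) (mul_add_one_div_mul_add_one_mem_Icc hpφ hpk)
  have hC : 0 ≤ C := (tsum_nonneg fun k => mul_nonneg k.cast_nonneg (hb0 k)).trans hble
  calc (∑' k : ℕ, (k : ℝ) * |b k - a k|) ≤ ∑' k : ℕ, (k : ℝ) * b k :=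
        hdsum.tsum_le_tsum hterm hbsum
    _ ≤ C := hble
    _ ≤ C * (2 * ((p : ℝ) + φ + 1) / ((p : ℝ) + φ + 2)) :=
        le_mul_of_one_le_right hC (one_le_two_mul_add_one_div_add_two hpφ)

theorem stmt3 (p : ℕ) (hp : 1 ≤ p) (α μ δ A B φ : ℝ)
    (hα0 : 0 ≤ α) (hαp : α < p) (hμ0 : 0 ≤ μ) (hμ1 : μ < 1)
    (hδ0 : 0 ≤ δ) (hδ1 : δ ≤ 1) (hB : -1 ≤ B) (hBA : B < A) (hA : A ≤ 1)
    (hφ : -(p : ℝ) < φ)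
    (b : ℕ → ℝ) (hb0 : ∀ k, 0 ≤ b k) (hbz : ∀ k, k < p + 1 → b k = 0)
    (hbsum : Summable (fun k : ℕ => (k : ℝ) * b k))
    (hble : (∑' k : ℕ, (k : ℝ) * b k) ≤
      ((p : ℝ) + 1) * (A - B) * ((p : ℝ) - α) /
        (((1 - B) + (A - B) * ((p : ℝ) - α)) * (1 - μ) * ((p : ℝ) + δ)))
    (a : ℕ → ℝ)
    (ha : ∀ k, p + 1 ≤ k →
      a k = ((p : ℝ) + φ) * ((p : ℝ) + φ + 1) / (((k : ℝ) + φ) * ((k : ℝ) + φ + 1)) * b k)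
    (haz : ∀ k, k < p + 1 → a k = 0)
    (hdsum : Summable (fun k : ℕ => (k : ℝ) * |b k - a k|)) :
    (∑' k : ℕ, (k : ℝ) * |b k - a k|) ≤
      ((p : ℝ) + 1) * (A - B) * ((p : ℝ) - α) /
        (((1 - B) + (A - B) * ((p : ℝ) - α)) * (1 - μ) * ((p : ℝ) + δ)) *
        (2 * ((p : ℝ) + φ + 1) / ((p : ℝ) + φ + 2)) :=
  stmt3_general p α μ δ A B φ hφ b hb0 hbz hbsum hble a ha haz hdsum
end

section
/- Let $0\le\alpha<p$, $0\le\mu<1$, $0\le\delta\le1$, $-1\le B<A\le1$, $p\in\mathbb{N}$, and set $c_k = \frac{[(1-B)(k-p)+(A-B)(p-\alpha)](1-\mu)^{k-p}\Gamma(k+\delta)}{\Gamma(p+\delta)(A-B)(p-\alpha)}$ for $k \ge p+1$. Assume $c_{k+1}>c_k>1$ for all $k\ge p+1$. Let $f(z)=z^p-\sum_{k=p+1}^\infty a_k z^k$ with $a_k\ge0$ and $\sum_{k=p+1}^\infty c_k a_k\le 1$, and let $f_m(z)=z^p-\sum_{k=p+1}^{m+p-1} a_k z^k$ be a partial sum.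 Then for all $z$ in the open unit disc, $\operatorname{Re}\left(\frac{f(z)}{f_m(z)}\right) \ge 1 - \frac{1}{c_{m+p}}$. -/
/-! Write `f = fₘ - T`, where `T = ∑_{k ≥ m+p} aₖ zᵏ` is the tail, so that
`Re (f / fₘ) ≥ 1 - |T| / |fₘ|`. With `r = |z|`, `s = ∑_{p < k < m+p} aₖ` and `t = ∑_{k ≥ m+p} aₖ`
one has `|fₘ| ≥ rᵖ (1 - s r)` and `|T| ≤ t r^(p+1)`, so `|T| / |fₘ| ≤ t r / (1 - s r)`.
Since `cₖ > 1` and `cₖ` increases, the coefficient condition gives `s + c_{m+p} t ≤ 1`,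
which bounds this by `1 / c_{m+p}`. -/

open Finset

lemma Finset.sum_range_eq_sum_Ico_of_eq_zero {M : Type*} [AddCommMonoid M] {g : ℕ → M}
    {n N : ℕ} (hg : ∀ k < n, g k = 0) (hnN : n ≤ N) :
    ∑ k ∈ range N, g k = ∑ k ∈ Ico n N, g k := by
  rw [← sum_range_add_sum_Ico g hnN, sum_eq_zero fun k hk => hg k (mem_range.1 hk), zero_add]

section Weights

variable {a c : ℕ → ℝ} {n : ℕ}

lemma le_mul_of_one_le_weight (ha : ∀ k, 0 ≤ a k) (haz : ∀ k < n, a k = 0)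
    (hc : ∀ k, n ≤ k → 1 ≤ c k) (k : ℕ) : a k ≤ c k * a k := by
  rcases lt_or_ge k n with hk | hk
  · simp [haz k hk]
  · nlinarith [hc k hk, ha k]

lemma summable_of_summable_weight_mul (ha : ∀ k, 0 ≤ a k) (haz : ∀ k < n, a k = 0)
    (hc : ∀ k, n ≤ k → 1 ≤ c k) (hsum : Summable fun k => c k * a k) : Summable a :=
  hsum.of_nonneg_of_le ha (le_mul_of_one_le_weight ha haz hc)

lemma sum_Ico_add_mul_tsum_le_tsum_weight_mul (ha : ∀ k, 0 ≤ a k) (haz : ∀ k < n, a k = 0)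
    (hc : ∀ k, n ≤ k → 1 ≤ c k) {N : ℕ} (hnN : n ≤ N) (hcN : ∀ k, N ≤ k → c N ≤ c k)
    (hsum : Summable fun k => c k * a k) :
    ∑ k ∈ Ico n N, a k + c N * ∑' k, a (k + N) ≤ ∑' k, c k * a k := by
  have hsa : Summable fun k => a (k + N) :=
    (summable_nat_add_iff N).2 (summable_of_summable_weight_mul ha haz hc hsum)
  have head : ∑ k ∈ Ico n N, a k ≤ ∑ k ∈ range N, c k * a k := by
    rw [← sum_range_eq_sum_Ico_of_eq_zero haz hnN]
    exact sum_le_sum fun k _ => le_mul_of_one_le_weight ha haz hc k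
  have tail : c N * ∑' k, a (k + N) ≤ ∑' k, c (k + N) * a (k + N) := by
    rw [← tsum_mul_left]
    exact (hsa.mul_left _).tsum_le_tsum
      (fun k => mul_le_mul_of_nonneg_right (hcN _ (Nat.le_add_left _ _)) (ha _))
      ((summable_nat_add_iff N).2 hsum)
  rw [← hsum.sum_add_tsum_nat_add N]
  linarith

end Weights

section PowerSeries

variable {a : ℕ → ℝ} {z : ℂ}

lemma norm_ofReal_mul_pow_le {k n : ℕ} (ha : 0 ≤ a k) (hz : ‖z‖ ≤ 1) (hnk : n ≤ k) :
    ‖(a k : ℂ) * z ^ k‖ ≤ a k * ‖z‖ ^ n := by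
  rw [norm_mul, norm_pow, Complex.norm_real, Real.norm_of_nonneg ha]
  exact mul_le_mul_of_nonneg_left (pow_le_pow_of_le_one (norm_nonneg z) hz hnk) ha

lemma summable_ofReal_mul_pow (ha : ∀ k, 0 ≤ a k) (hsa : Summable a) (hz : ‖z‖ ≤ 1) :
    Summable fun k => (a k : ℂ) * z ^ k :=
  Summable.of_norm_bounded hsa fun k => by
    simpa using norm_ofReal_mul_pow_le (n := 0) (ha k) hz (Nat.zero_le k)

lemma norm_sum_ofReal_mul_pow_le {s : Finset ℕ} {n : ℕ} (hs : ∀ k ∈ s, n ≤ k)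
    (ha : ∀ k, 0 ≤ a k) (hz : ‖z‖ ≤ 1) :
    ‖∑ k ∈ s, (a k : ℂ) * z ^ k‖ ≤ (∑ k ∈ s, a k) * ‖z‖ ^ n :=
  calc ‖∑ k ∈ s, (a k : ℂ) * z ^ k‖ ≤ ∑ k ∈ s, ‖(a k : ℂ) * z ^ k‖ := norm_sum_le _ _
    _ ≤ ∑ k ∈ s, a k * ‖z‖ ^ n :=
      sum_le_sum fun k hk => norm_ofReal_mul_pow_le (ha k) hz (hs k hk)
    _ = (∑ k ∈ s, a k) * ‖z‖ ^ n := (sum_mul _ _ _).symm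

lemma norm_tsum_ofReal_mul_pow_add_le (ha : ∀ k, 0 ≤ a k) (hsa : Summable a) (hz : ‖z‖ ≤ 1)
    {n N : ℕ} (hnN : n ≤ N) :
    ‖∑' k, (a (k + N) : ℂ) * z ^ (k + N)‖ ≤ (∑' k, a (k + N)) * ‖z‖ ^ n := by
  have hnorm : Summable fun k => ‖(a (k + N) : ℂ) * z ^ (k + N)‖ :=
    (summable_nat_add_iff N).2 (summable_ofReal_mul_pow ha hsa hz).norm
  rw [← tsum_mul_right]
  refine (norm_tsum_le_tsum_norm hnorm).trans (hnorm.tsum_le_tsum (fun k => ?_) ?_)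
  · exact norm_ofReal_mul_pow_le (ha _) hz (hnN.trans (Nat.le_add_left _ _))
  · exact ((summable_nat_add_iff N).2 hsa).mul_right _

end PowerSeries

lemma one_sub_norm_div_le_re_div_sub {u T : ℂ} (hu : u ≠ 0) :
    1 - ‖T‖ / ‖u‖ ≤ ((u - T) / u).re := by
  rw [sub_div, div_self hu, Complex.sub_re, Complex.one_re, ← norm_div]
  linarith [Complex.re_le_norm (T / u)]

lemma one_sub_inv_le_re_div_sub_sub {w S T : ℂ} {s t ρ c : ℝ} (hw : w ≠ 0) (hρ0 : 0 ≤ ρ)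
    (hρ1 : ρ < 1) (hc : 0 < c) (ht : 0 ≤ t) (hst : s + c * t ≤ 1)
    (hS : ‖S‖ ≤ s * ρ * ‖w‖) (hT : ‖T‖ ≤ t * ρ * ‖w‖) :
    1 - 1 / c ≤ ((w - S - T) / (w - S)).re := by
  have hw0 : 0 < ‖w‖ := norm_pos_iff.2 hw
  have hsρ : 0 < 1 - s * ρ := by nlinarith [mul_nonneg hc.le ht]
  have hlow : (1 - s * ρ) * ‖w‖ ≤ ‖w - S‖ := by
    nlinarith [norm_sub_norm_le w S]
  have hpos : 0 < ‖w - S‖ := lt_of_lt_of_le (mul_pos hsρ hw0) hlow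
  have hratio : ‖T‖ / ‖w - S‖ ≤ 1 / c := by
    rw [div_le_div_iff₀ hpos hc]
    nlinarith [mul_nonneg (mul_nonneg hc.le ht) hρ0, mul_nonneg hρ0 hw0.le]
  linarith [one_sub_norm_div_le_re_div_sub (T := T) (norm_pos_iff.1 hpos)]

theorem stmt9_general (p m : ℕ) (hm : 1 ≤ m)
    (c : ℕ → ℝ)
    (hc1 : ∀ k, p + 1 ≤ k → 1 < c k)
    (hcmono : ∀ k, p + 1 ≤ k → c k < c (k + 1))
    (a : ℕ → ℝ) (ha0 : ∀ k, 0 ≤ a k) (haz : ∀ k, k < p + 1 → a k = 0)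
    (hsum : Summable (fun k : ℕ => c k * a k))
    (hle : (∑' k : ℕ, c k * a k) ≤ 1)
    (f fm : ℂ → ℂ)
    (hf : ∀ z : ℂ, f z = z ^ p - ∑' k : ℕ, (a k : ℂ) * z ^ k)
    (hfm : ∀ z : ℂ, fm z = z ^ p - ∑ k ∈ Finset.Ico (p + 1) (m + p), (a k : ℂ) * z ^ k) :
    ∀ z : ℂ, ‖z‖ < 1 → z ≠ 0 → 1 - 1 / c (m + p) ≤ (f z / fm z).re := by
  intro z hz1 hz0
  have hpN : p + 1 ≤ m + p := by omega
  have hc1' : ∀ k, p + 1 ≤ k → 1 ≤ c k := fun k hk => (hc1 k hk).le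
  have hcN : ∀ k, m + p ≤ k → c (m + p) ≤ c k := fun k hk =>
    monotoneOn_nat_Ici_of_le_succ (fun j hj => (hcmono j hj).le)
      (Set.mem_Ici.2 hpN) (Set.mem_Ici.2 (hpN.trans hk)) hk
  have hsa := summable_of_summable_weight_mul ha0 haz hc1' hsum
  have hsplit : f z = fm z - ∑' k, (a (k + (m + p)) : ℂ) * z ^ (k + (m + p)) := by
    rw [hf, hfm, ← (summable_ofReal_mul_pow ha0 hsa hz1.le).sum_add_tsum_nat_add (m + p),
      sum_range_eq_sum_Ico_of_eq_zero (fun k hk => by simp [haz k hk]) hpN]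
    ring
  rw [hsplit, hfm]
  refine one_sub_inv_le_re_div_sub_sub (pow_ne_zero p hz0) (norm_nonneg z) hz1
    (by linarith [hc1 _ hpN]) (tsum_nonneg fun k => ha0 _)
    ((sum_Ico_add_mul_tsum_le_tsum_weight_mul ha0 haz hc1' hpN hcN hsum).trans hle) ?_ ?_
  · refine (norm_sum_ofReal_mul_pow_le (fun k hk => (mem_Ico.1 hk).1) ha0 hz1.le).trans_eq ?_
    rw [norm_pow]; ring
  · refine (norm_tsum_ofReal_mul_pow_add_le ha0 hsa hz1.le hpN).trans_eq ?_
    rw [norm_pow]; ring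

theorem stmt9 (p m : ℕ) (hp : 1 ≤ p) (hm : 1 ≤ m) (α μ δ A B : ℝ)
    (hα0 : 0 ≤ α) (hαp : α < p) (hμ0 : 0 ≤ μ) (hμ1 : μ < 1)
    (hδ0 : 0 ≤ δ) (hδ1 : δ ≤ 1) (hB : -1 ≤ B) (hBA : B < A) (hA : A ≤ 1)
    (c : ℕ → ℝ)
    (hc : ∀ k, c k =
      ((1 - B) * ((k : ℝ) - p) + (A - B) * ((p : ℝ) - α)) * (1 - μ) ^ (k - p) *
        Real.Gamma ((k : ℝ) + δ) / (Real.Gamma ((p : ℝ) + δ) * ((A - B) * ((p : ℝ) - α))))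
    (hc1 : ∀ k, p + 1 ≤ k → 1 < c k)
    (hcmono : ∀ k, p + 1 ≤ k → c k < c (k + 1))
    (a : ℕ → ℝ) (ha0 : ∀ k, 0 ≤ a k) (haz : ∀ k, k < p + 1 → a k = 0)
    (hsum : Summable (fun k : ℕ => c k * a k))
    (hle : (∑' k : ℕ, c k * a k) ≤ 1)
    (f fm : ℂ → ℂ)
    (hf : ∀ z : ℂ, f z = z ^ p - ∑' k : ℕ, (a k : ℂ) * z ^ k)
    (hfm : ∀ z : ℂ, fm z = z ^ p - ∑ k ∈ Finset.Ico (p + 1) (m + p), (a k : ℂ) * z ^ k) :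
    ∀ z : ℂ, ‖z‖ < 1 → z ≠ 0 → 1 - 1 / c (m + p) ≤ (f z / fm z).re :=
  stmt9_general p m hm c hc1 hcmono a ha0 haz hsum hle f fm hf hfm
end

section
/- Let $0\le\alpha<p$, $0\le\mu<1$, $0\le\delta\le1$, $-1\le B<A\le1$, $p\in\mathbb{N}$, and set $c_k = \frac{[(1-B)(k-p)+(A-B)(p-\alpha)](1-\mu)^{k-p}\Gamma(k+\delta)}{\Gamma(p+\delta)(A-B)(p-\alpha)}$ for $k\ge p+1$. Assume $c_{k+1}>c_k>1$ for all $k\ge p+1$. Let $f(z)=z^p-\sum_{k=p+1}^\infty a_k z^k$ with $a_k\ge0$, $\sum_{k=p+1}^\infty c_k a_k\le 1$, and let $f_m(z)=z^p-\sum_{k=p+1}^{m+p-1} a_k z^k$. Then for all $z$ in the open unit disc, $\operatorname{Re}\left(\frac{f_m(z)}{f(z)}\right) \ge \frac{c_{m+p}}{1+c_{m+p}}$. -/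
theorem re_div_nonneg_of_norm_le {u v : ℂ} (hv : v ≠ 0) (h : ‖u - v‖ ≤ ‖u + v‖) :
    0 ≤ (u / v).re := by
  have h2 : Complex.normSq (u - v) ≤ Complex.normSq (u + v) := by
    rw [← Complex.sq_norm, ← Complex.sq_norm]
    exact pow_le_pow_left₀ (norm_nonneg _) h 2
  have hP : 0 ≤ u.re * v.re + u.im * v.im := by
    simp only [Complex.normSq_apply, Complex.sub_re, Complex.sub_im, Complex.add_re,
      Complex.add_im] at h2
    nlinarith
  have hv2 : 0 < Complex.normSq v := Complex.normSq_pos.mpr hv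
  rw [Complex.div_re, ← add_div]
  exact div_nonneg hP hv2.le

set_option maxHeartbeats 1000000 in
theorem stmt10 (p m : ℕ) (hp : 1 ≤ p) (hm : 1 ≤ m) (α μ δ A B : ℝ)
    (hα0 : 0 ≤ α) (hαp : α < p) (hμ0 : 0 ≤ μ) (hμ1 : μ < 1)
    (hδ0 : 0 ≤ δ) (hδ1 : δ ≤ 1) (hB : -1 ≤ B) (hBA : B < A) (hA : A ≤ 1)
    (c : ℕ → ℝ)
    (hc : ∀ k, c k =
      ((1 - B) * ((k : ℝ) - p) + (A - B) * ((p : ℝ) - α)) * (1 - μ) ^ (k - p) *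
        Real.Gamma ((k : ℝ) + δ) / (Real.Gamma ((p : ℝ) + δ) * ((A - B) * ((p : ℝ) - α))))
    (hc1 : ∀ k, p + 1 ≤ k → 1 < c k)
    (hcmono : ∀ k, p + 1 ≤ k → c k < c (k + 1))
    (a : ℕ → ℝ) (ha0 : ∀ k, 0 ≤ a k) (haz : ∀ k, k < p + 1 → a k = 0)
    (hsum : Summable (fun k : ℕ => c k * a k))
    (hle : (∑' k : ℕ, c k * a k) ≤ 1)
    (f fm : ℂ → ℂ)
    (hf : ∀ z : ℂ, f z = z ^ p - ∑' k : ℕ, (a k : ℂ) * z ^ k)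
    (hfm : ∀ z : ℂ, fm z = z ^ p - ∑ k ∈ Finset.Ico (p + 1) (m + p), (a k : ℂ) * z ^ k) :
    ∀ z : ℂ, ‖z‖ < 1 → z ≠ 0 → c (m + p) / (1 + c (m + p)) ≤ (fm z / f z).re := by
  intro z hz hz0
  set r := ‖z‖ with hrdef
  have hr0 : 0 < r := norm_pos_iff.mpr hz0
  have hr1 : r < 1 := hz
  set q := m + p with hqdef
  have hpq : p + 1 ≤ q := by omega
  set cq := c q with hcqdef
  have hcq1 : 1 < cq := hc1 q hpq
  -- monotonicity of c beyond q
  have hmono : ∀ k, cq ≤ c (k + q) := by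
    intro k
    induction k with
    | zero => simp [hcqdef]
    | succ n ih =>
      refine ih.trans (le_of_lt ?_)
      have := hcmono (n + q) (by omega)
      calc c (n + q) < c (n + q + 1) := this
        _ = c (n + 1 + q) := by ring_nf
  have hca_nonneg : ∀ k, 0 ≤ c k * a k := by
    intro k
    rcases lt_or_ge k (p + 1) with h | h
    · simp [haz k h]
    · exact mul_nonneg (le_of_lt (lt_trans one_pos (hc1 k h))) (ha0 k)
  have hle_ca : ∀ k, a k ≤ c k * a k := by
    intro k
    rcases lt_or_ge k (p + 1) with h | h
    · simp [haz k h]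
    · nth_rewrite 1 [← one_mul (a k)]
      exact mul_le_mul_of_nonneg_right (le_of_lt (hc1 k h)) (ha0 k)
  have hsa : Summable a := hsum.of_nonneg_of_le ha0 hle_ca
  have hnormg : ∀ k, ‖(a k : ℂ) * z ^ k‖ = a k * r ^ k := by
    intro k
    rw [norm_mul, norm_pow, Complex.norm_real, Real.norm_eq_abs, abs_of_nonneg (ha0 k)]
  have hgr_nonneg : ∀ k, 0 ≤ a k * r ^ k := fun k =>
    mul_nonneg (ha0 k) (pow_nonneg hr0.le k)
  have hsgr : Summable (fun k => a k * r ^ k) := by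
    refine hsa.of_nonneg_of_le hgr_nonneg (fun k => ?_)
    calc a k * r ^ k ≤ a k * 1 :=
          mul_le_mul_of_nonneg_left (pow_le_one₀ hr0.le hr1.le) (ha0 k)
      _ = a k := mul_one _
  have hsg : Summable (fun k => (a k : ℂ) * z ^ k) := by
    refine Summable.of_norm ?_
    simpa only [hnormg] using hsgr
  -- splitting of the complex sum
  set S1 : ℂ := ∑ k ∈ Finset.Ico (p + 1) q, (a k : ℂ) * z ^ k with hS1def
  set S2 : ℂ := ∑' k : ℕ, (a (k + q) : ℂ) * z ^ (k + q) with hS2def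
  set T1 : ℝ := ∑ k ∈ Finset.Ico (p + 1) q, a k * r ^ k with hT1def
  set T2 : ℝ := ∑' k : ℕ, a (k + q) * r ^ (k + q) with hT2def
  have hzero_sum : ∀ (g : ℕ → ℂ), (∀ k, k < p + 1 → g k = 0) →
      ∑ k ∈ Finset.range q, g k = ∑ k ∈ Finset.Ico (p + 1) q, g k := by
    intro g hg
    rw [Finset.range_eq_Ico, ← Finset.sum_Ico_consecutive _ (Nat.zero_le (p + 1)) hpq]
    rw [Finset.sum_eq_zero (fun k hk => hg k (Finset.mem_Ico.mp hk).2), zero_add]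
  have hsplitC : (∑' k : ℕ, (a k : ℂ) * z ^ k) = S1 + S2 := by
    rw [← hsg.sum_add_tsum_nat_add q]
    congr 1
    exact hzero_sum _ (fun k hk => by rw [haz k hk]; simp)
  have hfz : f z = z ^ p - S1 - S2 := by rw [hf z, hsplitC]; ring
  have hfmz : fm z = z ^ p - S1 := by rw [hfm z]
  -- norm estimates
  have hstail : Summable (fun k => a (k + q) * r ^ (k + q)) :=
    (summable_nat_add_iff q).mpr hsgr
  have hT1nonneg : 0 ≤ T1 := Finset.sum_nonneg (fun k _ => hgr_nonneg k)
  have hT2nonneg : 0 ≤ T2 := tsum_nonneg (fun k => hgr_nonneg (k + q))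
  have hS1le : ‖S1‖ ≤ T1 := by
    refine (norm_sum_le _ _).trans (le_of_eq ?_)
    exact Finset.sum_congr rfl (fun k _ => hnormg k)
  have hS2le : ‖S2‖ ≤ T2 := by
    calc ‖S2‖ ≤ ∑' k : ℕ, ‖(a (k + q) : ℂ) * z ^ (k + q)‖ :=
          norm_tsum_le_tsum_norm (by simpa only [hnormg] using hstail)
      _ = T2 := tsum_congr (fun k => hnormg (k + q))
  -- coefficient inequality
  have hsatail : Summable (fun k => c (k + q) * a (k + q)) :=
    (summable_nat_add_iff q).mpr hsum
  have hsplitR : ∑ k ∈ Finset.Ico (p + 1) q, c k * a k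
      + ∑' k : ℕ, c (k + q) * a (k + q) ≤ 1 := by
    have e : ∑ k ∈ Finset.range q, c k * a k = ∑ k ∈ Finset.Ico (p + 1) q, c k * a k := by
      rw [Finset.range_eq_Ico, ← Finset.sum_Ico_consecutive _ (Nat.zero_le (p + 1)) hpq]
      rw [Finset.sum_eq_zero (fun k hk => by
        rw [haz k (Finset.mem_Ico.mp hk).2, mul_zero]), zero_add]
    calc ∑ k ∈ Finset.Ico (p + 1) q, c k * a k + ∑' k : ℕ, c (k + q) * a (k + q)
        = ∑ k ∈ Finset.range q, c k * a k + ∑' k : ℕ, c (k + q) * a (k + q) := by rw [e]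
      _ = ∑' k : ℕ, c k * a k := hsum.sum_add_tsum_nat_add q
      _ ≤ 1 := hle
  have hpow : ∀ k, p ≤ k → r ^ k ≤ r ^ p :=
    fun k hk => pow_le_pow_of_le_one hr0.le hr1.le hk
  have hT : T1 + cq * T2 ≤ r ^ p := by
    have h1 : T1 ≤ r ^ p * ∑ k ∈ Finset.Ico (p + 1) q, c k * a k := by
      rw [Finset.mul_sum]
      refine Finset.sum_le_sum (fun k hk => ?_)
      have hk' : p + 1 ≤ k := (Finset.mem_Ico.mp hk).1
      calc a k * r ^ k ≤ (c k * a k) * r ^ p :=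
            mul_le_mul (hle_ca k) (hpow k (by omega)) (pow_nonneg hr0.le k) (hca_nonneg k)
        _ = r ^ p * (c k * a k) := by ring
    have h2 : cq * T2 ≤ r ^ p * ∑' k : ℕ, c (k + q) * a (k + q) := by
      rw [hT2def, ← tsum_mul_left, ← tsum_mul_left]
      refine Summable.tsum_le_tsum (fun k => ?_) (hstail.mul_left cq) (hsatail.mul_left (r ^ p))
      calc cq * (a (k + q) * r ^ (k + q)) ≤ c (k + q) * (a (k + q) * r ^ p) := by
            refine mul_le_mul (hmono k) ?_ (hgr_nonneg (k + q))
              (le_trans (by linarith) (hmono k))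
            exact mul_le_mul_of_nonneg_left (hpow (k + q) (by omega)) (ha0 (k + q))
        _ = r ^ p * (c (k + q) * a (k + q)) := by ring
    calc T1 + cq * T2
        ≤ r ^ p * (∑ k ∈ Finset.Ico (p + 1) q, c k * a k + ∑' k : ℕ, c (k + q) * a (k + q)) := by
          rw [mul_add]; exact add_le_add h1 h2
      _ ≤ r ^ p * 1 := mul_le_mul_of_nonneg_left hsplitR (pow_nonneg hr0.le p)
      _ = r ^ p := mul_one _
  -- f z ≠ 0
  have hf0 : f z ≠ 0 := by
    intro h
    rw [hf z, sub_eq_zero] at h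
    have htot : ‖∑' k : ℕ, (a k : ℂ) * z ^ k‖ ≤ ∑' k : ℕ, a k * r ^ k := by
      calc ‖∑' k : ℕ, (a k : ℂ) * z ^ k‖ ≤ ∑' k : ℕ, ‖(a k : ℂ) * z ^ k‖ :=
            norm_tsum_le_tsum_norm (by simpa only [hnormg] using hsgr)
        _ = ∑' k : ℕ, a k * r ^ k := tsum_congr (fun k => hnormg k)
    have hsumr : (∑' k : ℕ, a k * r ^ k) ≤ r ^ (p + 1) := by
      calc (∑' k : ℕ, a k * r ^ k) ≤ ∑' k : ℕ, r ^ (p + 1) * (c k * a k) := by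
            refine Summable.tsum_le_tsum (fun k => ?_) hsgr (hsum.mul_left _)
            rcases lt_or_ge k (p + 1) with hkk | hkk
            · simp [haz k hkk]
            · calc a k * r ^ k ≤ (c k * a k) * r ^ (p + 1) :=
                  mul_le_mul (hle_ca k) (pow_le_pow_of_le_one hr0.le hr1.le hkk)
                    (pow_nonneg hr0.le k) (hca_nonneg k)
                _ = r ^ (p + 1) * (c k * a k) := by ring
        _ = r ^ (p + 1) * ∑' k : ℕ, c k * a k := tsum_mul_left
        _ ≤ r ^ (p + 1) * 1 := mul_le_mul_of_nonneg_left hle (pow_nonneg hr0.le _)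
        _ = r ^ (p + 1) := mul_one _
    have hrp : r ^ p ≤ r ^ (p + 1) := by
      calc r ^ p = ‖z ^ p‖ := by rw [norm_pow]
        _ = ‖∑' k : ℕ, (a k : ℂ) * z ^ k‖ := by rw [h]
        _ ≤ r ^ (p + 1) := htot.trans hsumr
    have : r ^ (p + 1) < r ^ p := by
      rw [pow_succ]
      nlinarith [pow_pos hr0 p]
    linarith
  -- main inequality
  set C : ℂ := (cq : ℂ) with hCdef
  have hnormC1 : ‖1 + C‖ = 1 + cq := by
    rw [hCdef, show (1 : ℂ) + (cq : ℂ) = ((1 + cq : ℝ) : ℂ) by push_cast; ring,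
      Complex.norm_real, Real.norm_eq_abs, abs_of_pos (by linarith)]
  have hnormC2 : ‖C - 1‖ = cq - 1 := by
    rw [hCdef, show (cq : ℂ) - 1 = ((cq - 1 : ℝ) : ℂ) by push_cast; ring,
      Complex.norm_real, Real.norm_eq_abs, abs_of_pos (by linarith)]
  have hkey : ‖((1 + C) * fm z - C * f z) - f z‖ ≤ ‖((1 + C) * fm z - C * f z) + f z‖ := by
    have e1 : ((1 + C) * fm z - C * f z) - f z = (1 + C) * S2 := by
      rw [hfz, hfmz]; ring
    have e2 : ((1 + C) * fm z - C * f z) + f z = 2 * z ^ p - (2 * S1 - (C - 1) * S2) := by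
      rw [hfz, hfmz]; ring
    rw [e1, e2]
    have hb1 : ‖(1 + C) * S2‖ ≤ (1 + cq) * T2 := by
      rw [norm_mul, hnormC1]
      exact mul_le_mul_of_nonneg_left hS2le (by linarith)
    have hb2 : 2 * r ^ p - (2 * T1 + (cq - 1) * T2) ≤ ‖2 * z ^ p - (2 * S1 - (C - 1) * S2)‖ := by
      refine le_trans ?_ (norm_sub_norm_le _ _)
      have h2zp : ‖(2 : ℂ) * z ^ p‖ = 2 * r ^ p := by
        rw [norm_mul, norm_pow, hrdef]
        norm_num
      have hrest : ‖2 * S1 - (C - 1) * S2‖ ≤ 2 * T1 + (cq - 1) * T2 := by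
        calc ‖2 * S1 - (C - 1) * S2‖ ≤ ‖(2 : ℂ) * S1‖ + ‖(C - 1) * S2‖ := norm_sub_le _ _
          _ = 2 * ‖S1‖ + (cq - 1) * ‖S2‖ := by
              rw [norm_mul, norm_mul, hnormC2]; norm_num
          _ ≤ 2 * T1 + (cq - 1) * T2 := by
              have := mul_le_mul_of_nonneg_left hS1le (by norm_num : (0:ℝ) ≤ 2)
              have := mul_le_mul_of_nonneg_left hS2le (by linarith : (0:ℝ) ≤ cq - 1)
              linarith
      rw [h2zp]
      linarith
    calc ‖(1 + C) * S2‖ ≤ (1 + cq) * T2 := hb1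
      _ ≤ 2 * r ^ p - (2 * T1 + (cq - 1) * T2) := by linarith
      _ ≤ ‖2 * z ^ p - (2 * S1 - (C - 1) * S2)‖ := hb2
  have hre : 0 ≤ (((1 + C) * fm z - C * f z) / f z).re :=
    re_div_nonneg_of_norm_le hf0 hkey
  have hdiv : ((1 + C) * fm z - C * f z) / f z = (1 + C) * (fm z / f z) - C := by
    field_simp
  rw [hdiv] at hre
  have hre2 : ((1 + C) * (fm z / f z) - C).re = (1 + cq) * (fm z / f z).re - cq := by
    rw [hCdef]
    simp [Complex.sub_re, Complex.mul_re, Complex.add_re, Complex.add_im,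
      Complex.ofReal_re, Complex.ofReal_im]
  rw [hre2] at hre
  rw [div_le_iff₀ (by linarith : (0:ℝ) < 1 + cq)]
  nlinarith [hre]
end
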